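/- For the maximally coherent-type pure state on ℂ^d ⊗ ℂ^d given by ρ = (1/d) Σ_{i,j=0}^{d-1} |ii⟩⟨jj|, the minimal trace-norm distance from ρ to the set of separable states equals 2 − 2/d. -/

import Mathlib

/-!
The infimum is attained at σ* = (1/d) Σᵢ |ii⟩⟨ii|. With D the projection onto span{|ii⟩},
ρ ≤ D, so ρ - σ* = (1 - 1/d) ρ - (1/d) (D - ρ) is a combination of orthogonal projections and
its trace norm is (1 - 1/d) Tr ρ + (1/d) Tr (D - ρ) = 2 - 2/d.

For the lower bound, pair ρ - σ with the witness 2ρ - 1, which lies between -1 and 1: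
splitting ρ - σ into its positive and negative parts gives ‖ρ - σ‖₁ ≥ Tr ((2ρ - 1)(ρ - σ))
= 2 - 2 Tr (ρσ). For a product state, Tr (ρ (A ⊗ B)) = Tr (Bᵀ A) / d ≤ Tr A Tr B / d = 1/d,
and this bound passes to convex combinations.
-/

open Matrix Kronecker
open scoped ComplexOrder

/-- The trace norm ‖M‖₁ = Tr√(M†M). -/
noncomputable def traceNorm {n : Type*} [Fintype n] [DecidableEq n]
    (M : Matrix n n ℂ) : ℝ :=
  (((Matrix.posSemidef_conjTranspose_mul_self M).1.eigenvectorUnitary.1 *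
      diagonal (((↑) : ℝ → ℂ) ∘ (√·) ∘ (Matrix.posSemidef_conjTranspose_mul_self M).1.eigenvalues) *
      (star (Matrix.posSemidef_conjTranspose_mul_self M).1.eigenvectorUnitary :
        Matrix n n ℂ)).trace).re

/-- A density matrix: positive semidefinite with unit trace. -/
def IsDensity {n : Type*} [Fintype n] (ρ : Matrix n n ℂ) : Prop :=
  ρ.PosSemidef ∧ ρ.trace = 1

/-- A bipartite state on ℂ^d⊗ℂ^d is separable if it is a convex combination of
tensor products of density matrices. -/
def Separable {d : ℕ} (σ : Matrix (Fin d × Fin d) (Fin d × Fin d) ℂ) : Prop :=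
  ∃ (m : ℕ) (w : Fin m → ℝ) (A B : Fin m → Matrix (Fin d) (Fin d) ℂ),
    (∀ i, 0 ≤ w i) ∧ (∑ i, w i = 1) ∧ (∀ i, IsDensity (A i)) ∧ (∀ i, IsDensity (B i)) ∧
    σ = ∑ i, (w i : ℂ) • (A i ⊗ₖ B i)

open scoped MatrixOrder

namespace Matrix

variable {n : Type*} [Fintype n] [DecidableEq n]

lemma PosSemidef.trace_mul_nonneg {A B : Matrix n n ℂ} (hA : A.PosSemidef) (hB : B.PosSemidef) :
    0 ≤ (A * B).trace := by
  obtain ⟨s, hs, rfl⟩ : ∃ s : Matrix n n ℂ, sᴴ = s ∧ A = s * s :=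
    ⟨CFC.sqrt A, (CFC.sqrt_nonneg A).posSemidef.1, (CFC.sqrt_mul_sqrt_self A hA.nonneg).symm⟩
  have hcycle : (s * s * B).trace = (sᴴ * B * s).trace := by
    rw [hs]; exact (trace_mul_cycle s B s).symm
  exact hcycle ▸ (hB.conjTranspose_mul_mul_same s).trace_nonneg

lemma PosSemidef.le_algebraMap_re_trace {A : Matrix n n ℂ} (hA : A.PosSemidef) :
    A ≤ algebraMap ℝ (Matrix n n ℂ) A.trace.re := by
  refine le_algebraMap_of_spectrum_le (fun x hx => ?_) hA.1.isSelfAdjoint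
  obtain ⟨i, rfl⟩ : x ∈ Set.range hA.1.eigenvalues := hA.1.spectrum_real_eq_range_eigenvalues ▸ hx
  have htrace : A.trace.re = ∑ j, hA.1.eigenvalues j := by
    simp [hA.1.trace_eq_sum_eigenvalues]
  rw [htrace]
  exact Finset.single_le_sum (fun j _ => hA.eigenvalues_nonneg j) (Finset.mem_univ i)

lemma PosSemidef.re_trace_mul_le {A B : Matrix n n ℂ} (hA : A.PosSemidef) (hB : B.PosSemidef) :
    (A * B).trace.re ≤ A.trace.re * B.trace.re := by
  have h := (Complex.le_def.mp (hA.trace_mul_nonneg (le_iff.mp hB.le_algebraMap_re_trace))).1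
  simp only [Complex.zero_re, Algebra.algebraMap_eq_smul_one, mul_sub, Algebra.mul_smul_comm,
    mul_one, trace_sub, trace_smul, Complex.real_smul, Complex.sub_re, Complex.mul_re,
    Complex.ofReal_re, Complex.ofReal_im, zero_mul, sub_zero, sub_nonneg] at h
  linarith

end Matrix

section TraceNorm

variable {n : Type*} [Fintype n] [DecidableEq n]

lemma traceNorm_eq_re_trace_of_sq {M S : Matrix n n ℂ} (hS : S.PosSemidef) (h : S ^ 2 = Mᴴ * M) :
    traceNorm M = S.trace.re := by
  have hsqrt : (posSemidef_conjTranspose_mul_self M).1.cfc Real.sqrt = S := by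
    rw [← IsHermitian.cfc_eq, ← cfcₙ_eq_cfc (hf0 := Real.sqrt_zero),
      ← CFC.sqrt_eq_real_sqrt _ (posSemidef_conjTranspose_mul_self M).nonneg, ← h,
      CFC.sqrt_sq S hS.nonneg]
  rw [traceNorm, ← hsqrt, IsHermitian.cfc, Unitary.conjStarAlgAut_apply]
  rfl

lemma traceNorm_eq_re_trace_abs (M : Matrix n n ℂ) : traceNorm M = (CFC.abs M).trace.re :=
  traceNorm_eq_re_trace_of_sq (CFC.abs_nonneg M).posSemidef (CFC.abs_sq M)

lemma re_trace_mul_le_traceNorm {M H : Matrix n n ℂ} (hM : M.IsHermitian) (hH₁ : H ≤ 1)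
    (hH₂ : -1 ≤ H) : (H * M).trace.re ≤ traceNorm M := by
  have hgap : ∀ P N : Matrix n n ℂ, (P + N).trace - (H * (P - N)).trace
      = ((1 - H) * P).trace + ((H - -1) * N).trace := by
    intro P N
    simp only [sub_mul, mul_sub, one_mul, neg_mul, trace_sub, trace_add, trace_neg]
    ring
  have hpos := (le_iff.mp hH₁).trace_mul_nonneg (CFC.posPart_nonneg M).posSemidef
  have hneg := (le_iff.mp hH₂).trace_mul_nonneg (CFC.negPart_nonneg M).posSemidef
  have hsum := (Complex.le_def.mp (add_nonneg hpos hneg)).1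
  rw [← hgap, CFC.posPart_add_negPart M hM.isSelfAdjoint,
    CFC.posPart_sub_negPart M hM.isSelfAdjoint, Complex.sub_re] at hsum
  rw [traceNorm_eq_re_trace_abs]
  simp only [Complex.zero_re] at hsum
  linarith

lemma traceNorm_smul_sub_smul {P Q : Matrix n n ℂ} (hP : IsStarProjection P)
    (hQ : IsStarProjection Q) (hPQ : P * Q = 0) {a b : ℝ} (ha : 0 ≤ a) (hb : 0 ≤ b) :
    traceNorm (a • P - b • Q) = a * P.trace.re + b * Q.trace.re := by
  have hQP : Q * P = 0 := by
    simpa [hP.isSelfAdjoint.star_eq, hQ.isSelfAdjoint.star_eq] using congr(star $(hPQ))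
  have hS : (a • P + b • Q).PosSemidef :=
    (hP.nonneg.posSemidef.smul ha).add (hQ.nonneg.posSemidef.smul hb)
  have hM : (a • P - b • Q)ᴴ = a • P - b • Q :=
    (((IsSelfAdjoint.all a).smul hP.isSelfAdjoint).sub
      ((IsSelfAdjoint.all b).smul hQ.isSelfAdjoint)).star_eq
  rw [traceNorm_eq_re_trace_of_sq hS]
  · simp [trace_add, trace_smul]
  · rw [hM, sq]
    simp only [add_mul, mul_add, sub_mul, mul_sub, smul_mul_smul_comm, hPQ, hQP,
      hP.isIdempotentElem.eq, hQ.isIdempotentElem.eq, smul_zero]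
    module

lemma re_trace_add_trace_sub_two_mul_le_traceNorm {P σ : Matrix n n ℂ} (hP : IsStarProjection P)
    (hσ : σ.IsHermitian) : (P.trace + σ.trace - 2 * (P * σ).trace).re ≤ traceNorm (P - σ) := by
  have hle : P - (1 - P) ≤ 1 := by
    rw [le_iff, show 1 - (P - (1 - P)) = (1 - P) + (1 - P) by abel]
    exact hP.one_sub.nonneg.posSemidef.add hP.one_sub.nonneg.posSemidef
  have hge : -1 ≤ P - (1 - P) := by
    rw [le_iff, show P - (1 - P) - -1 = P + P by abel]
    exact hP.nonneg.posSemidef.add hP.nonneg.posSemidef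
  have htrace : ((P - (1 - P)) * (P - σ)).trace = P.trace + σ.trace - 2 * (P * σ).trace := by
    simp only [sub_mul, mul_sub, one_mul, trace_sub, hP.isIdempotentElem.eq]
    ring
  exact htrace ▸ re_trace_mul_le_traceNorm (hP.isSelfAdjoint.sub hσ) hle hge

end TraceNorm

section Density

variable {n : Type*} [Fintype n]

lemma IsDensity.re_trace_mul_le_one [DecidableEq n] {A B : Matrix n n ℂ} (hA : IsDensity A)
    (hB : IsDensity B) : (A * B).trace.re ≤ 1 := by
  simpa [hA.2, hB.2] using hA.1.re_trace_mul_le hB.1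

lemma IsDensity.transpose {A : Matrix n n ℂ} (hA : IsDensity A) : IsDensity Aᵀ :=
  ⟨hA.1.transpose, by rw [trace_transpose, hA.2]⟩

lemma IsDensity.kronecker {m : Type*} [Fintype m] {A : Matrix n n ℂ} {B : Matrix m m ℂ}
    (hA : IsDensity A) (hB : IsDensity B) : IsDensity (A ⊗ₖ B) :=
  ⟨hA.1.kronecker hB.1, by rw [trace_kronecker, hA.2, hB.2, one_mul]⟩

lemma Separable.isDensity {d : ℕ} {σ : Matrix (Fin d × Fin d) (Fin d × Fin d) ℂ}
    (hσ : Separable σ) : IsDensity σ := by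
  obtain ⟨m, w, A, B, hw, hw1, hA, hB, rfl⟩ := hσ
  refine ⟨posSemidef_sum _ fun i _ =>
    ((hA i).kronecker (hB i)).1.smul (Complex.zero_le_real.mpr (hw i)), ?_⟩
  simpa [trace_sum, trace_smul, ((hA _).kronecker (hB _)).2] using congrArg Complex.ofReal hw1

end Density

section MaximallyEntangled

variable {d : ℕ}

/-- `vec 1 = Σᵢ |ii⟩`, so this is the projection onto the maximally entangled vector. -/
noncomputable def maxEntangled (d : ℕ) : Matrix (Fin d × Fin d) (Fin d × Fin d) ℂ :=
  (d : ℂ)⁻¹ • vecMulVec (vec 1) (vec 1)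

def diagonalProjection (d : ℕ) : Matrix (Fin d × Fin d) (Fin d × Fin d) ℂ :=
  diagonal (vec 1)

lemma maxEntangled_eq_of : (of fun a b : Fin d × Fin d =>
    if a.1 = a.2 ∧ b.1 = b.2 then (1 / d : ℂ) else 0) = maxEntangled d := by
  ext a b
  simp only [maxEntangled, of_apply, Matrix.smul_apply, vecMulVec_apply, vec, one_apply,
    smul_eq_mul]
  split_ifs <;> simp_all [eq_comm]

lemma vec_one_dotProduct_vec_one : vec (1 : Matrix (Fin d) (Fin d) ℂ) ⬝ᵥ vec 1 = d := by
  simp [vec_dotProduct_vec]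

lemma isStarProjection_maxEntangled (hd : 0 < d) : IsStarProjection (maxEntangled d) where
  isIdempotentElem := by
    have hd' : (d : ℂ) ≠ 0 := by exact_mod_cast hd.ne'
    rw [maxEntangled, IsIdempotentElem, smul_mul_smul_comm, vecMulVec_mul_vecMulVec,
      vec_one_dotProduct_vec_one, vecMulVec_smul, smul_smul]
    field_simp
  isSelfAdjoint := by
    simp [maxEntangled, IsSelfAdjoint, star_eq_conjTranspose, conjTranspose_vecMulVec, star_vec]

lemma trace_maxEntangled (hd : 0 < d) : (maxEntangled d).trace = 1 := by
  have hd' : (d : ℂ) ≠ 0 := by exact_mod_cast hd.ne'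
  simp [maxEntangled, trace_smul, vec_one_dotProduct_vec_one, hd']

lemma vec_one_mul_vec_one : vec (1 : Matrix (Fin d) (Fin d) ℂ) * vec 1 = vec 1 := by
  simp [← vec_hadamard, one_hadamard]

lemma isStarProjection_diagonalProjection : IsStarProjection (diagonalProjection d) where
  isIdempotentElem := by
    rw [diagonalProjection, IsIdempotentElem, diagonal_mul_diagonal']
    exact congrArg diagonal vec_one_mul_vec_one
  isSelfAdjoint := by
    simp [diagonalProjection, IsSelfAdjoint, star_eq_conjTranspose, star_vec]

lemma trace_diagonalProjection : (diagonalProjection d).trace = d := by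
  rw [diagonalProjection, trace_diagonal, ← vec_one_dotProduct_vec_one, dotProduct]
  exact Finset.sum_congr rfl fun a _ => (congrFun vec_one_mul_vec_one a).symm

lemma maxEntangled_mul_diagonalProjection :
    maxEntangled d * diagonalProjection d = maxEntangled d := by
  have hvec : vec 1 ᵥ* diagonal (vec 1) = vec (1 : Matrix (Fin d) (Fin d) ℂ) :=
    (funext fun a => vecMul_diagonal _ _ a).trans vec_one_mul_vec_one
  rw [maxEntangled, diagonalProjection, smul_mul, vecMulVec_mul, hvec]

lemma trace_maxEntangled_mul_kronecker (A B : Matrix (Fin d) (Fin d) ℂ) :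
    (maxEntangled d * (A ⊗ₖ B)).trace = (d : ℂ)⁻¹ * (Bᵀ * A).trace := by
  rw [maxEntangled, smul_mul, vecMulVec_mul, trace_smul, trace_vecMulVec, vec_vecMul_kronecker,
    vec_dotProduct_vec]
  simp

lemma isDensity_diagonal_single (i : Fin d) : IsDensity (diagonal (Pi.single i (1 : ℂ))) :=
  ⟨PosSemidef.diagonal (Pi.single_nonneg.mpr zero_le_one), by simp [trace_diagonal]⟩

lemma separable_smul_diagonalProjection (hd : 0 < d) :
    Separable ((d : ℂ)⁻¹ • diagonalProjection d) := by
  refine ⟨d, fun _ => (d : ℝ)⁻¹, fun i => diagonal (Pi.single i 1),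
    fun i => diagonal (Pi.single i 1), fun _ => by positivity, ?_, isDensity_diagonal_single,
    isDensity_diagonal_single, ?_⟩
  · have hd' : (d : ℝ) ≠ 0 := by exact_mod_cast hd.ne'
    simp [hd']
  · ext a b
    simp [diagonalProjection, diagonal_kronecker_diagonal, Matrix.sum_apply, diagonal_apply,
      Pi.single_apply, vec, one_apply, eq_comm (a := a.2)]

lemma Separable.re_trace_maxEntangled_mul_le {σ : Matrix (Fin d × Fin d) (Fin d × Fin d) ℂ}
    (hσ : Separable σ) : (maxEntangled d * σ).trace.re ≤ (d : ℝ)⁻¹ := by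
  obtain ⟨m, w, A, B, hw, hw1, hA, hB, rfl⟩ := hσ
  have hterm : ∀ i, ((maxEntangled d * ((w i : ℂ) • (A i ⊗ₖ B i))).trace).re
      ≤ w i * (d : ℝ)⁻¹ := fun i => by
    rw [Matrix.mul_smul, trace_smul, trace_maxEntangled_mul_kronecker, smul_eq_mul,
      ← Complex.ofReal_natCast, ← Complex.ofReal_inv, ← mul_assoc, ← Complex.ofReal_mul,
      Complex.re_ofReal_mul]
    exact mul_le_of_le_one_right (mul_nonneg (hw i) (by positivity))
      ((hB i).transpose.re_trace_mul_le_one (hA i))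
  calc (maxEntangled d * ∑ i, (w i : ℂ) • (A i ⊗ₖ B i)).trace.re
      ≤ ∑ i, w i * (d : ℝ)⁻¹ := by
        simpa only [Finset.mul_sum, trace_sum, Complex.re_sum] using
          Finset.sum_le_sum fun i _ => hterm i
    _ = (d : ℝ)⁻¹ := by rw [← Finset.sum_mul, hw1, one_mul]

lemma traceNorm_maxEntangled_sub_smul_diagonalProjection (hd : 0 < d) :
    traceNorm (maxEntangled d - (d : ℂ)⁻¹ • diagonalProjection d) = 2 - 2 / d := by
  have hρ := isStarProjection_maxEntangled hd
  have hQ := hρ.sub_of_mul_eq_left isStarProjection_diagonalProjection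
    maxEntangled_mul_diagonalProjection
  have hρQ : maxEntangled d * (diagonalProjection d - maxEntangled d) = 0 := by
    rw [mul_sub, maxEntangled_mul_diagonalProjection, hρ.isIdempotentElem.eq, sub_self]
  have hsplit : maxEntangled d - (d : ℂ)⁻¹ • diagonalProjection d
      = (1 - (d : ℝ)⁻¹) • maxEntangled d - (d : ℝ)⁻¹ • (diagonalProjection d - maxEntangled d) := by
    rw [← Complex.coe_smul, ← Complex.coe_smul, Complex.ofReal_sub, Complex.ofReal_inv]
    push_cast
    module
  have hcoeff : 0 ≤ 1 - (d : ℝ)⁻¹ := sub_nonneg.mpr (inv_le_one_of_one_le₀ (by exact_mod_cast hd))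
  rw [hsplit, traceNorm_smul_sub_smul hρ hQ hρQ hcoeff (by positivity), trace_sub,
    trace_maxEntangled hd, trace_diagonalProjection]
  have hd' : (d : ℝ) ≠ 0 := by exact_mod_cast hd.ne'
  simp only [Complex.one_re, mul_one, Complex.sub_re, Complex.natCast_re]
  field_simp
  ring

lemma two_sub_two_div_le_traceNorm_maxEntangled_sub (hd : 0 < d)
    {σ : Matrix (Fin d × Fin d) (Fin d × Fin d) ℂ} (hσ : Separable σ) :
    2 - 2 / d ≤ traceNorm (maxEntangled d - σ) := by
  have hgap := re_trace_add_trace_sub_two_mul_le_traceNorm (isStarProjection_maxEntangled hd)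
    hσ.isDensity.1.1
  rw [trace_maxEntangled hd, hσ.isDensity.2] at hgap
  have hoverlap := hσ.re_trace_maxEntangled_mul_le
  simp only [Complex.sub_re, Complex.add_re, Complex.one_re, Complex.mul_re, Complex.re_ofNat,
    Complex.im_ofNat, zero_mul, sub_zero] at hgap
  rw [div_eq_mul_inv]
  linarith

end MaximallyEntangled

/-- For the maximally entangled state ρ = (1/d) Σ_{i,j} |ii⟩⟨jj| on ℂ^d⊗ℂ^d,
the minimal trace-norm distance to the separable states equals 2 − 2/d. -/
theorem stmt_7 (d : ℕ) (hd : 0 < d) :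
    IsLeast {x : ℝ | ∃ σ : Matrix (Fin d × Fin d) (Fin d × Fin d) ℂ,
        Separable σ ∧ x = traceNorm
          ((Matrix.of fun a b : Fin d × Fin d =>
            if a.1 = a.2 ∧ b.1 = b.2 then (1 / d : ℂ) else 0) - σ)}
      (2 - 2 / d) := by
  rw [maxEntangled_eq_of]
  refine ⟨⟨_, separable_smul_diagonalProjection hd,
    (traceNorm_maxEntangled_sub_smul_diagonalProjection hd).symm⟩, ?_⟩
  rintro x ⟨σ, hσ, rfl⟩
  exact two_sub_two_div_le_traceNorm_maxEntangled_sub hd hσ
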